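/- arXiv:1807.10918 — 9 statements merged into one kernel-verified Lean document; each statement's English description precedes it below -/
import Mathlib

section
/- If x and y are two distinct admissible infinite decimals (i.e., their integer parts differ or their digit sequences differ at some index), then there exists a positive integer l such that |x_k − y_k| ≥ 10^{-l} for every k > l, where x_k, y_k denote the k-th rational truncations. -/
/-- An infinite decimal: integer part `z` and digits `d : ℕ → ℕ` (indices ≥ 1 used),
each digit between 0 and 9. -/
structure InfDec where
  z : ℤ
  d : ℕ → ℕ
  d_le : ∀ k, 1 ≤ k → d k ≤ 9

/-- The `k`-th rational truncation `x_k = z + Σ_{i=1}^k d(i)·10^{-i}`. -/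
def InfDec.trunc (x : InfDec) (k : ℕ) : ℚ :=
  (x.z : ℚ) + ∑ i ∈ Finset.Icc 1 k, (x.d i : ℚ) / 10 ^ i

/-- The real value `val(x) = z + Σ_{i=1}^∞ d(i)·10^{-i}`. -/
noncomputable def InfDec.val (x : InfDec) : ℝ :=
  (x.z : ℝ) + ∑' i : ℕ, (x.d (i + 1) : ℝ) / 10 ^ (i + 1)

/-- Admissibility: `d(k) < 9` for infinitely many `k`. -/
def InfDec.Admissible (x : InfDec) : Prop :=
  ∀ N : ℕ, ∃ k ≥ N, x.d k < 9

/-- The `m`-th truncation of a rational: `T_m(q) = ⌊10^m q⌋ / 10^m`. -/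
def Tq (m : ℕ) (q : ℚ) : ℚ := (⌊(10 : ℚ) ^ m * q⌋ : ℚ) / 10 ^ m

/-- The `m`-th truncation of a real: `T_m(r) = ⌊10^m r⌋ / 10^m`. -/
noncomputable def Tr (m : ℕ) (r : ℝ) : ℝ := (⌊(10 : ℝ) ^ m * r⌋ : ℝ) / 10 ^ m

/-- The `m`-th digit of a rational (`m ≥ 1`): `θ_m(q) = ⌊10^m q⌋ − 10·⌊10^{m−1} q⌋`. -/
def digq (m : ℕ) (q : ℚ) : ℤ := ⌊(10 : ℚ) ^ m * q⌋ - 10 * ⌊(10 : ℚ) ^ (m - 1) * q⌋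

lemma trunc_succ (x : InfDec) (k : ℕ) :
    x.trunc (k+1) = x.trunc k + (x.d (k+1) : ℚ) / 10 ^ (k+1) := by
  unfold InfDec.trunc
  rw [Finset.sum_Icc_succ_top (by omega : 1 ≤ k+1)]
  ring

lemma trunc_diff (x : InfDec) {m k : ℕ} (h : m ≤ k) :
    x.trunc k - x.trunc m = ∑ i ∈ Finset.Ioc m k, (x.d i : ℚ) / 10 ^ i := by
  unfold InfDec.trunc
  rw [show (1:ℕ) = 0 + 1 from rfl, Finset.Icc_add_one_left_eq_Ioc, Finset.Icc_add_one_left_eq_Ioc,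
    ← Finset.sum_Ioc_consecutive _ (Nat.zero_le m) h]
  ring

lemma sum_geo (m : ℕ) : ∀ k, m ≤ k →
    ∑ i ∈ Finset.Ioc m k, (9:ℚ) / 10 ^ i = 1 / 10 ^ m - 1 / 10 ^ k := by
  intro k hk
  induction k, hk using Nat.le_induction with
  | base => simp
  | succ k hk ih =>
    rw [← Finset.Icc_add_one_left_eq_Ioc, Finset.sum_Icc_succ_top (by omega), Finset.Icc_add_one_left_eq_Ioc, ih]
    have : (10:ℚ) ^ k ≠ 0 := by positivity
    field_simp
    ring

lemma trunc_int (x : InfDec) (m : ℕ) : ∃ a : ℤ, x.trunc m = (a : ℚ) / 10 ^ m := by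
  refine ⟨x.z * 10 ^ m + ∑ i ∈ Finset.Icc 1 m, (x.d i : ℤ) * 10 ^ (m - i), ?_⟩
  unfold InfDec.trunc
  push_cast
  rw [add_div, Finset.sum_div]
  congr 1
  · field_simp
  · refine Finset.sum_congr rfl fun i hi => ?_
    have him : i ≤ m := (Finset.mem_Icc.mp hi).2
    have : (10:ℚ) ^ (m - i) * 10 ^ i = 10 ^ m := by
      rw [← pow_add]; congr 1; omega
    have h10 : (10:ℚ) ^ i ≠ 0 := by positivity
    have h10m : (10:ℚ) ^ m ≠ 0 := by positivity
    field_simp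
    rw [← this]; ring

lemma key (x y : InfDec) (hy : y.Admissible) (m : ℕ)
    (h : y.trunc m + 1 / 10 ^ m ≤ x.trunc m) :
    ∃ l : ℕ, 1 ≤ l ∧ ∀ k > l, (1 / 10 ^ l : ℚ) ≤ x.trunc k - y.trunc k := by
  obtain ⟨j, hjm, hj9⟩ := hy (m + 1)
  refine ⟨j, by omega, fun k hk => ?_⟩
  have hmk : m ≤ k := by omega
  have hxm : x.trunc m ≤ x.trunc k := by
    have := trunc_diff x hmk
    have hnn : (0:ℚ) ≤ ∑ i ∈ Finset.Ioc m k, (x.d i : ℚ) / 10 ^ i :=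
      Finset.sum_nonneg fun i _ => by positivity
    linarith
  have hyk : y.trunc k ≤ y.trunc m + 1 / 10 ^ m - 1 / 10 ^ j := by
    have hd := trunc_diff y hmk
    have hsum : ∑ i ∈ Finset.Ioc m k, (y.d i : ℚ) / 10 ^ i
        ≤ ∑ i ∈ Finset.Ioc m k, (9:ℚ) / 10 ^ i - 1 / 10 ^ j := by
      have hle : (1:ℚ) / 10 ^ j ≤ ∑ i ∈ Finset.Ioc m k, ((9:ℚ) / 10 ^ i - (y.d i : ℚ) / 10 ^ i) := by
        have hjmem : j ∈ Finset.Ioc m k := Finset.mem_Ioc.mpr ⟨by omega, by omega⟩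
        refine le_trans ?_ (Finset.single_le_sum (f := fun i => (9:ℚ) / 10 ^ i - (y.d i : ℚ) / 10 ^ i)
          (fun i hi => ?_) hjmem)
        · have h8 : (y.d j : ℚ) ≤ 8 := by exact_mod_cast Nat.lt_succ_iff.mp hj9
          have h10 : (0:ℚ) < 10 ^ j := by positivity
          show (1:ℚ) / 10 ^ j ≤ 9 / 10 ^ j - (y.d j : ℚ) / 10 ^ j
          rw [div_sub_div_same, div_le_div_iff₀ h10 h10]
          nlinarith
        · have hi1 : 1 ≤ i := by
            have := (Finset.mem_Ioc.mp hi).1; omega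
          have : (y.d i : ℚ) ≤ 9 := by exact_mod_cast y.d_le i hi1
          have h10 : (0:ℚ) < 10 ^ i := by positivity
          have h9 : (y.d i : ℚ) / 10 ^ i ≤ 9 / 10 ^ i := by gcongr
          linarith
      rw [Finset.sum_sub_distrib] at hle
      linarith
    rw [sum_geo m k hmk] at hsum
    have hk10 : (0:ℚ) < 1 / 10 ^ k := by positivity
    linarith
  linarith

theorem stmt0 (x y : InfDec) (hx : x.Admissible) (hy : y.Admissible)
    (hne : x.z ≠ y.z ∨ ∃ i, 1 ≤ i ∧ x.d i ≠ y.d i) :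
    ∃ l : ℕ, 1 ≤ l ∧ ∀ k > l, (1 / 10 ^ l : ℚ) ≤ |x.trunc k - y.trunc k| := by
  have hm : ∃ m, x.trunc m ≠ y.trunc m := by
    by_contra hall
    push_neg at hall
    have hz : x.z = y.z := by
      have h0 := hall 0
      unfold InfDec.trunc at h0
      simpa using h0
    have hd : ∀ i, 1 ≤ i → x.d i = y.d i := by
      intro i hi
      obtain ⟨i, rfl⟩ := Nat.exists_eq_add_of_lt (show 0 < i by omega)
      rw [zero_add] at *
      have h1 := trunc_succ x i
      have h2 := trunc_succ y i
      rw [hall (i+1), hall i] at h1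
      have h10 : (10:ℚ) ^ (i+1) ≠ 0 := by positivity
      have : (x.d (i+1) : ℚ) = (y.d (i+1) : ℚ) := by
        field_simp at h1 h2
        linarith
      exact_mod_cast this
    rcases hne with h | ⟨i, hi, hne⟩
    · exact h hz
    · exact hne (hd i hi)
  obtain ⟨m, hm⟩ := hm
  obtain ⟨a, ha⟩ := trunc_int x m
  obtain ⟨b, hb⟩ := trunc_int y m
  have h10 : (0:ℚ) < 10 ^ m := by positivity
  have hab : a ≠ b := by
    rintro rfl
    exact hm (ha.trans hb.symm)
  rcases lt_or_gt_of_ne hab with hlt | hlt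
  · -- b ≥ a + 1 : y bigger
    have : x.trunc m + 1 / 10 ^ m ≤ y.trunc m := by
      rw [ha, hb]
      rw [← add_div, div_le_div_iff₀ h10 h10]
      have : (a:ℚ) + 1 ≤ b := by exact_mod_cast hlt
      nlinarith
    obtain ⟨l, hl1, hl⟩ := key y x hx m this
    exact ⟨l, hl1, fun k hk => (hl k hk).trans ((le_abs_self _).trans (le_of_eq (abs_sub_comm _ _)))⟩
  · have : y.trunc m + 1 / 10 ^ m ≤ x.trunc m := by
      rw [ha, hb]
      rw [← add_div, div_le_div_iff₀ h10 h10]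
      have : (b:ℚ) + 1 ≤ a := by exact_mod_cast hlt
      nlinarith
    obtain ⟨l, hl1, hl⟩ := key x y hy m this
    exact ⟨l, hl1, fun k hk => (hl k hk).trans (le_abs_self _)⟩
end

section
/- Let x = (z_x, a) and y = (z_y, b) be infinite decimals and let m ≥ 0 be such that a(k) + b(k) = 9 for all k > m. Then val(x) + val(y) = x_m + y_m + 10^{-m}, where x_m, y_m are the m-th rational truncations and val denotes the real value. -/
lemma summ_aux (x : InfDec) : Summable (fun i : ℕ => (x.d (i + 1) : ℝ) / 10 ^ (i + 1)) := by
  apply Summable.of_nonneg_of_le (fun i => by positivity) (fun i => ?_)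
    ((summable_geometric_of_lt_one (by norm_num) (by norm_num : (1/10 : ℝ) < 1)).mul_left 9)
  have hd : (x.d (i + 1) : ℝ) ≤ 9 := by
    exact_mod_cast x.d_le (i + 1) (Nat.le_add_left 1 i)
  have h1 : (x.d (i + 1) : ℝ) / 10 ^ (i + 1) ≤ 9 / 10 ^ (i + 1) := by gcongr
  refine h1.trans ?_
  rw [div_pow, one_pow, mul_one_div]
  gcongr
  · norm_num
  · omega

theorem stmt4 (x y : InfDec) (m : ℕ) (h : ∀ k > m, x.d k + y.d k = 9) :
    x.val + y.val = (x.trunc m : ℝ) + (y.trunc m : ℝ) + 1 / 10 ^ m := by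
  have hsx := summ_aux x
  have hsy := summ_aux y
  have hx := Summable.sum_add_tsum_nat_add m hsx
  have hy := Summable.sum_add_tsum_nat_add m hsy
  have htailsum : Summable (fun i : ℕ => (9 : ℝ) / 10 ^ (i + m + 1)) := by
    apply Summable.of_nonneg_of_le (fun i => by positivity) (fun i => ?_)
      ((summable_geometric_of_lt_one (by norm_num) (by norm_num : (1/10 : ℝ) < 1)).mul_left (9 / 10 ^ (m+1)))
    apply le_of_eq
    rw [div_pow, one_pow, mul_one_div, div_div, ← pow_add, add_assoc, Nat.add_comm i (m + 1)]
  have htx : Summable (fun i : ℕ => (x.d (i + m + 1) : ℝ) / 10 ^ (i + m + 1)) := by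
    have := (summable_nat_add_iff (f := fun i : ℕ => (x.d (i + 1) : ℝ) / 10 ^ (i + 1)) m).mpr hsx
    convert this using 2 with i
  have hty : Summable (fun i : ℕ => (y.d (i + m + 1) : ℝ) / 10 ^ (i + m + 1)) := by
    have := (summable_nat_add_iff (f := fun i : ℕ => (y.d (i + 1) : ℝ) / 10 ^ (i + 1)) m).mpr hsy
    convert this using 2 with i
  have hkey : (∑' i : ℕ, (x.d (i + m + 1) : ℝ) / 10 ^ (i + m + 1)) +
      (∑' i : ℕ, (y.d (i + m + 1) : ℝ) / 10 ^ (i + m + 1)) = 1 / 10 ^ m := by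
    rw [← Summable.tsum_add htx hty]
    have h1 : ∀ i : ℕ, (x.d (i + m + 1) : ℝ) / 10 ^ (i + m + 1) +
        (y.d (i + m + 1) : ℝ) / 10 ^ (i + m + 1) = (9 : ℝ) / 10 ^ (i + m + 1) := by
      intro i
      rw [← add_div]
      congr 1
      have := h (i + m + 1) (by omega)
      exact_mod_cast this
    rw [tsum_congr h1]
    have h2 : ∀ i : ℕ, (9 : ℝ) / 10 ^ (i + m + 1) = (9 / 10 ^ (m + 1)) * (1/10) ^ i := by
      intro i
      rw [div_pow, one_pow, pow_add, pow_add]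
      field_simp
      ring
    rw [tsum_congr h2, tsum_mul_left, tsum_geometric_of_lt_one (by norm_num) (by norm_num)]
    rw [pow_succ]
    field_simp
    ring
  have hcast : ∀ w : InfDec, ((w.trunc m : ℚ) : ℝ) =
      (w.z : ℝ) + ∑ i ∈ Finset.range m, (w.d (i + 1) : ℝ) / 10 ^ (i + 1) := by
    intro w
    rw [InfDec.trunc]
    push_cast
    congr 1
    rw [← Finset.Ico_add_one_right_eq_Icc, Finset.sum_Ico_eq_sum_range]
    simp [add_comm 1]
  rw [InfDec.val, InfDec.val, hcast x, hcast y, ← hx, ← hy]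
  have hrx : ∑' i : ℕ, (x.d (i + m + 1) : ℝ) / 10 ^ (i + m + 1) =
      ∑' i : ℕ, (x.d (i + m + 1) : ℝ) / 10 ^ (i + m + 1) := rfl
  have hshift : ∀ w : InfDec, (∑' i : ℕ, (w.d (i + m + 1) : ℝ) / 10 ^ (i + m + 1)) =
      ∑' i : ℕ, (w.d (i + m + 1) : ℝ) / 10 ^ (i + m + 1) := fun _ => rfl
  have e1 : (∑' i : ℕ, (x.d (i + m + 1) : ℝ) / 10 ^ (i + m + 1)) +
      (∑' i : ℕ, (y.d (i + m + 1) : ℝ) / 10 ^ (i + m + 1)) = 1 / 10 ^ m := hkey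
  linarith [e1]
end

section
/- Let x = (z_x, a) and y = (z_y, b) be admissible infinite decimals, and let k ≥ 1 satisfy a(k) + b(k) ≠ 9. Then 0 ≤ (val(x) + val(y)) − T_{k−1}(x_k + y_k) < 10^{-(k−1)}; consequently the (k−1)-th truncation of the real number val(x) + val(y) equals T_{k−1}(x_k + y_k). -/
lemma aux_summable_geom (c : ℕ) : Summable (fun i : ℕ => (9:ℝ) / 10 ^ (i + c + 1)) := by
  have h : Summable (fun i : ℕ => (9 / 10 ^ (c+1) : ℝ) * (1/10 : ℝ) ^ i) :=
    (summable_geometric_of_lt_one (by norm_num) (by norm_num)).mul_left _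
  refine h.congr fun i => ?_
  rw [div_pow, one_pow]
  rw [div_mul_div_comm, mul_one, ← pow_add]
  ring_nf

lemma aux_summable (x : InfDec) (c : ℕ) :
    Summable (fun i : ℕ => (x.d (i + c + 1) : ℝ) / 10 ^ (i + c + 1)) := by
  refine Summable.of_nonneg_of_le (fun i => by positivity) (fun i => ?_) (aux_summable_geom c)
  gcongr
  exact_mod_cast x.d_le _ (by omega)

lemma aux_tsum_geom (c : ℕ) : ∑' i : ℕ, (9:ℝ) / 10 ^ (i + c + 1) = 1 / 10 ^ c := by
  have h : ∀ i : ℕ, (9:ℝ) / 10 ^ (i + c + 1) = (9 / 10 ^ (c+1) : ℝ) * (1/10 : ℝ) ^ i := by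
    intro i
    rw [div_pow, one_pow, div_mul_div_comm, mul_one, ← pow_add]
    ring_nf
  rw [tsum_congr h, tsum_mul_left, tsum_geometric_of_lt_one (by norm_num) (by norm_num)]
  rw [pow_succ]
  norm_num
  ring

lemma aux_Icc_range (f : ℕ → ℚ) (k : ℕ) :
    ∑ i ∈ Finset.Icc 1 k, f i = ∑ i ∈ Finset.range k, f (i + 1) := by
  induction k with
  | zero => simp
  | succ n ih => rw [Finset.sum_Icc_succ_top (by omega), Finset.sum_range_succ, ih]

lemma aux_val_eq (x : InfDec) (m : ℕ) :
    x.val = (x.trunc m : ℝ) + ∑' i : ℕ, (x.d (i + m + 1) : ℝ) / 10 ^ (i + m + 1) := by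
  have hs : Summable (fun i : ℕ => (x.d (i + 1) : ℝ) / 10 ^ (i + 1)) := by
    simpa using aux_summable x 0
  have key := Summable.sum_add_tsum_nat_add (f := fun i : ℕ => (x.d (i + 1) : ℝ) / 10 ^ (i + 1)) m hs
  unfold InfDec.val InfDec.trunc
  rw [aux_Icc_range]
  push_cast
  rw [← key]
  ring

lemma aux_tail_bounds (x : InfDec) (hx : x.Admissible) (m : ℕ) :
    0 ≤ (∑' i : ℕ, (x.d (i + m + 1) : ℝ) / 10 ^ (i + m + 1)) ∧
    (∑' i : ℕ, (x.d (i + m + 1) : ℝ) / 10 ^ (i + m + 1)) < 1 / 10 ^ m := by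
  constructor
  · exact tsum_nonneg fun i => by positivity
  · obtain ⟨j, hj, hj9⟩ := hx (m + 1)
    rw [← aux_tsum_geom m]
    refine Summable.tsum_lt_tsum (i := j - m - 1) (fun i => ?_) ?_ (aux_summable x m) (aux_summable_geom m)
    · gcongr
      show (x.d (i + m + 1) : ℝ) ≤ 9
      exact_mod_cast x.d_le (i + m + 1) (by omega)
    · have hji : j - m - 1 + m + 1 = j := by omega
      rw [hji]
      have h9 : (x.d j : ℝ) < 9 := by exact_mod_cast hj9
      gcongr

lemma aux_trunc_int (x : InfDec) (m : ℕ) : ∃ n : ℤ, (10:ℚ) ^ m * x.trunc m = n := by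
  induction m with
  | zero => exact ⟨x.z, by simp [InfDec.trunc]⟩
  | succ n ih =>
    obtain ⟨a, ha⟩ := ih
    refine ⟨10 * a + x.d (n + 1), ?_⟩
    have htr : x.trunc (n+1) = x.trunc n + (x.d (n+1) : ℚ) / 10 ^ (n+1) := by
      unfold InfDec.trunc
      rw [Finset.sum_Icc_succ_top (by omega)]
      ring
    have h1 : (10:ℚ) ^ (n+1) * ((x.d (n+1) : ℚ) / 10 ^ (n+1)) = (x.d (n+1) : ℚ) := by
      field_simp
    calc (10:ℚ) ^ (n+1) * x.trunc (n+1)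
        = 10 * ((10:ℚ) ^ n * x.trunc n) + 10 ^ (n+1) * ((x.d (n+1) : ℚ) / 10 ^ (n+1)) := by
          rw [htr]; ring
      _ = ((10 * a + x.d (n + 1) : ℤ) : ℚ) := by rw [ha, h1]; push_cast; ring

theorem stmt6 (x y : InfDec) (hx : x.Admissible) (hy : y.Admissible)
    (k : ℕ) (hk : 1 ≤ k) (h : x.d k + y.d k ≠ 9) :
    (0 ≤ (x.val + y.val) - (Tq (k - 1) (x.trunc k + y.trunc k) : ℝ) ∧
      (x.val + y.val) - (Tq (k - 1) (x.trunc k + y.trunc k) : ℝ) < 1 / 10 ^ (k - 1)) ∧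
    Tr (k - 1) (x.val + y.val) = (Tq (k - 1) (x.trunc k + y.trunc k) : ℝ) := by
  obtain ⟨j, rfl⟩ : ∃ j, k = j + 1 := ⟨k - 1, by omega⟩
  simp only [Nat.add_sub_cancel]
  set q : ℚ := x.trunc (j+1) + y.trunc (j+1) with hq
  set c : ℕ := x.d (j+1) + y.d (j+1) with hc
  -- 10^j * q = integer + c/10
  obtain ⟨nx, hnx⟩ := aux_trunc_int x j
  obtain ⟨ny, hny⟩ := aux_trunc_int y j
  have htrx : x.trunc (j+1) = x.trunc j + (x.d (j+1) : ℚ) / 10 ^ (j+1) := by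
    unfold InfDec.trunc
    rw [Finset.sum_Icc_succ_top (by omega)]
    ring
  have htry : y.trunc (j+1) = y.trunc j + (y.d (j+1) : ℚ) / 10 ^ (j+1) := by
    unfold InfDec.trunc
    rw [Finset.sum_Icc_succ_top (by omega)]
    ring
  have hpow : (10:ℚ) ^ j * ((1:ℚ) / 10 ^ (j+1)) = 1 / 10 := by
    rw [pow_succ]; field_simp
  have hkey : (10:ℚ) ^ j * q = ((nx + ny : ℤ) : ℚ) + (c : ℚ) / 10 := by
    have e1 : (10:ℚ)^j * ((x.d (j+1):ℚ) / 10^(j+1)) = (x.d (j+1):ℚ) / 10 := by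
      rw [div_eq_mul_one_div, ← mul_assoc, mul_comm ((10:ℚ)^j) _, mul_assoc, hpow]
      ring
    have e2 : (10:ℚ)^j * ((y.d (j+1):ℚ) / 10^(j+1)) = (y.d (j+1):ℚ) / 10 := by
      rw [div_eq_mul_one_div, ← mul_assoc, mul_comm ((10:ℚ)^j) _, mul_assoc, hpow]
      ring
    calc (10:ℚ) ^ j * q
        = 10 ^ j * x.trunc j + 10 ^ j * ((x.d (j+1):ℚ) / 10 ^ (j+1))
          + (10 ^ j * y.trunc j + 10 ^ j * ((y.d (j+1):ℚ) / 10 ^ (j+1))) := by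
          rw [hq, htrx, htry]; ring
      _ = (nx:ℚ) + (x.d (j+1):ℚ) / 10 + ((ny:ℚ) + (y.d (j+1):ℚ) / 10) := by
          rw [hnx, hny, e1, e2]
      _ = ((nx + ny : ℤ) : ℚ) + (c : ℚ) / 10 := by rw [hc]; push_cast; ring
  have hfloor : ⌊(10:ℚ)^j * q⌋ = nx + ny + ⌊(c:ℚ)/10⌋ := by
    rw [hkey, Int.floor_intCast_add]
  -- fractional part bound
  have hcle : c ≤ 18 := by
    have := x.d_le (j+1) (by omega); have := y.d_le (j+1) (by omega); omega
  have hfrac : (c:ℚ)/10 - ⌊(c:ℚ)/10⌋ ≤ 8/10 := by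
    interval_cases c <;> norm_num at h <;> norm_num
  have hfrac0 : 0 ≤ (c:ℚ)/10 - ⌊(c:ℚ)/10⌋ := by
    have := Int.floor_le ((c:ℚ)/10); linarith
  -- q - Tq j q
  have hT : (Tq j q) = ((⌊(10:ℚ)^j * q⌋ : ℚ)) / 10 ^ j := rfl
  have hpowpos : (0:ℚ) < 10 ^ j := by positivity
  have hq10 : q = (((nx + ny : ℤ):ℚ) + (c:ℚ)/10) / 10 ^ j := by
    rw [← hkey]; field_simp
  have hqT : q - Tq j q = ((c:ℚ)/10 - ⌊(c:ℚ)/10⌋) / 10 ^ j := by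
    rw [hT, hfloor, hq10]
    push_cast
    ring
  have hqT_le : q - Tq j q ≤ 8 / 10 ^ (j+1) := by
    rw [hqT, pow_succ]
    rw [div_le_div_iff₀ (by positivity) (by positivity)]
    nlinarith [hfrac]
  have hqT_nonneg : 0 ≤ q - Tq j q := by
    rw [hqT]; positivity
  -- real side
  obtain ⟨htx0, htx1⟩ := aux_tail_bounds x hx (j+1)
  obtain ⟨hty0, hty1⟩ := aux_tail_bounds y hy (j+1)
  have hvx := aux_val_eq x (j+1)
  have hvy := aux_val_eq y (j+1)
  set tx : ℝ := ∑' i : ℕ, (x.d (i + (j+1) + 1) : ℝ) / 10 ^ (i + (j+1) + 1)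
  set ty : ℝ := ∑' i : ℕ, (y.d (i + (j+1) + 1) : ℝ) / 10 ^ (i + (j+1) + 1)
  have hsum : x.val + y.val = (q : ℝ) + (tx + ty) := by
    rw [hvx, hvy, hq]; push_cast; ring
  have hdiff : x.val + y.val - (Tq j q : ℝ) = ((q - Tq j q : ℚ) : ℝ) + (tx + ty) := by
    rw [hsum]; push_cast; ring
  have hqTr_le : ((q - Tq j q : ℚ) : ℝ) ≤ 8 / 10 ^ (j+1) := by
    have := hqT_le
    have : ((q - Tq j q : ℚ) : ℝ) ≤ ((8 / 10 ^ (j+1) : ℚ) : ℝ) := by exact_mod_cast this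
    simpa using this
  have hqTr_nonneg : (0:ℝ) ≤ ((q - Tq j q : ℚ) : ℝ) := by exact_mod_cast hqT_nonneg
  have hlow : 0 ≤ x.val + y.val - (Tq j q : ℝ) := by
    rw [hdiff]; linarith
  have hpowR : (10:ℝ) ^ (j+1) = 10 * 10 ^ j := by rw [pow_succ]; ring
  have hup : x.val + y.val - (Tq j q : ℝ) < 1 / 10 ^ j := by
    rw [hdiff]
    have h1 : tx < 1 / 10 ^ (j+1) := htx1
    have h2 : ty < 1 / 10 ^ (j+1) := hty1
    have hp : (0:ℝ) < 10 ^ (j+1) := by positivity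
    have : (8:ℝ) / 10 ^ (j+1) + 1 / 10 ^ (j+1) + 1 / 10 ^ (j+1) = 1 / 10 ^ j := by
      rw [hpowR]; field_simp; ring
    linarith
  refine ⟨⟨hlow, hup⟩, ?_⟩
  -- floor equality
  have hM : (10:ℝ) ^ j * (Tq j q : ℝ) = ((⌊(10:ℚ)^j * q⌋ : ℤ) : ℝ) := by
    rw [hT]
    push_cast
    field_simp
  have hpj : (0:ℝ) < 10 ^ j := by positivity
  have hA : 0 ≤ 10 ^ j * (x.val + y.val - (Tq j q : ℝ)) := mul_nonneg hpj.le hlow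
  have hB : 10 ^ j * (x.val + y.val - (Tq j q : ℝ)) < 1 := by
    have := mul_lt_mul_of_pos_left hup hpj
    rwa [mul_one_div, div_self (ne_of_gt hpj)] at this
  have hfl : ⌊(10:ℝ)^j * (x.val + y.val)⌋ = ⌊(10:ℚ)^j * q⌋ := by
    rw [Int.floor_eq_iff]
    constructor
    · push_cast
      nlinarith [hA, hM]
    · push_cast
      nlinarith [hB, hM]
  unfold Tr
  rw [hfl, ← hM]
  field_simp
end

section
/- Let x = (z_x, a) and y = (z_y, b) be admissible infinite decimals such that a(k) + b(k) ≠ 9 for infinitely many k ≥ 1. Then for every s ∈ ℕ there exist j ≥ s and k > j with a(k) + b(k) ≠ 9 and θ_j(x_k + y_k) ≤ 8, where θ_j(q) = ⌊10^j q⌋ − 10·⌊10^{j−1} q⌋ is the j-th digit of the rational q and x_k, y_k are the k-th truncations. (In particular, the digit string of the sum is not eventually 9.) -/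
namespace Stmt7Aux

/-- Tail sum. -/
def T (c : ℕ → ℕ) (n j : ℕ) : ℚ := ∑ i ∈ Finset.Ioc j n, (c i : ℚ) / 10 ^ (i - j)

/-- Integer head. -/
def I (Z : ℤ) (c : ℕ → ℕ) (j : ℕ) : ℤ :=
  10 ^ j * Z + ∑ i ∈ Finset.Ioc 0 j, (c i : ℤ) * 10 ^ (j - i)

lemma T_nonneg (c : ℕ → ℕ) (n j : ℕ) : 0 ≤ T c n j := by
  unfold T; positivity

lemma T_rec (c : ℕ → ℕ) (n j : ℕ) (h1 : 1 ≤ j) (h2 : j ≤ n) :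
    T c n (j - 1) = ((c j : ℚ) + T c n j) / 10 := by
  unfold T
  have hIoc : Finset.Ioc (j - 1) n = Finset.Icc j n := by
    rw [← Finset.Icc_add_one_left_eq_Ioc]; congr 1; omega
  rw [hIoc, Finset.Icc_eq_cons_Ioc h2, Finset.sum_cons]
  have hjj : j - (j - 1) = 1 := by omega
  rw [hjj]
  have h3 : ∀ i ∈ Finset.Ioc j n,
      (c i : ℚ) / 10 ^ (i - (j - 1)) = (c i : ℚ) / 10 ^ (i - j) / 10 := by
    intro i hi
    have hmem := Finset.mem_Ioc.mp hi
    have hii : i - (j - 1) = (i - j) + 1 := by omega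
    rw [hii, pow_succ, div_div]
  rw [Finset.sum_congr rfl h3, ← Finset.sum_div, pow_one]
  ring

lemma T_lt_aux (c : ℕ → ℕ) (n : ℕ) (hc : ∀ i, 1 ≤ i → c i ≤ 18) :
    ∀ t j, j + t = n → T c n j < 2 := by
  intro t
  induction t with
  | zero =>
    intro j hj
    have : j = n := by omega
    subst this
    simp [T]
  | succ t ih =>
    intro j hj
    have h1 : T c n (j + 1) < 2 := ih (j + 1) (by omega)
    have h2 : T c n j = ((c (j + 1) : ℚ) + T c n (j + 1)) / 10 := by
      have := T_rec c n (j + 1) (by omega) (by omega)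
      simpa using this
    have h3 : (c (j + 1) : ℚ) ≤ 18 := by exact_mod_cast hc (j + 1) (by omega)
    rw [h2]; linarith

lemma T_lt (c : ℕ → ℕ) (n j : ℕ) (hc : ∀ i, 1 ≤ i → c i ≤ 18) (hjn : j ≤ n) :
    T c n j < 2 :=
  T_lt_aux c n hc (n - j) j (by omega)

lemma floorT_bounds (c : ℕ → ℕ) (n j : ℕ) (hc : ∀ i, 1 ≤ i → c i ≤ 18) (hjn : j ≤ n) :
    0 ≤ ⌊T c n j⌋ ∧ ⌊T c n j⌋ ≤ 1 := by
  constructor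
  · exact Int.floor_nonneg.mpr (T_nonneg c n j)
  · have h2 : ⌊T c n j⌋ < 2 := Int.floor_lt.mpr (by exact_mod_cast T_lt c n j hc hjn)
    omega

lemma I_succ (Z : ℤ) (c : ℕ → ℕ) (m : ℕ) :
    I Z c (m + 1) = 10 * I Z c m + c (m + 1) := by
  unfold I
  rw [Finset.sum_Ioc_succ_top (Nat.zero_le m)]
  have h1 : ∀ i ∈ Finset.Ioc 0 m,
      (c i : ℤ) * 10 ^ (m + 1 - i) = 10 * ((c i : ℤ) * 10 ^ (m - i)) := by
    intro i hi
    have hmem := Finset.mem_Ioc.mp hi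
    have : m + 1 - i = (m - i) + 1 := by omega
    rw [this, pow_succ]; ring
  rw [Finset.sum_congr rfl h1, ← Finset.mul_sum, Nat.sub_self, pow_zero, pow_succ]
  ring

lemma main_id (Z : ℤ) (c : ℕ → ℕ) (n j : ℕ) (hjn : j ≤ n) :
    (10 : ℚ) ^ j * ((Z : ℚ) + ∑ i ∈ Finset.Ioc 0 n, (c i : ℚ) / 10 ^ i)
      = (I Z c j : ℚ) + T c n j := by
  have hsplit : ∑ i ∈ Finset.Ioc 0 n, (c i : ℚ) / 10 ^ i
      = ∑ i ∈ Finset.Ioc 0 j, (c i : ℚ) / 10 ^ i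
        + ∑ i ∈ Finset.Ioc j n, (c i : ℚ) / 10 ^ i :=
    (Finset.sum_Ioc_consecutive _ (Nat.zero_le j) hjn).symm
  have h1 : (10 : ℚ) ^ j * ∑ i ∈ Finset.Ioc 0 j, (c i : ℚ) / 10 ^ i
      = ∑ i ∈ Finset.Ioc 0 j, (c i : ℚ) * 10 ^ (j - i) := by
    rw [Finset.mul_sum]
    apply Finset.sum_congr rfl
    intro i hi
    have hmem := Finset.mem_Ioc.mp hi
    have hp : (10 : ℚ) ^ j = 10 ^ (j - i) * 10 ^ i := by
      rw [← pow_add]; congr 1; omega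
    have h10 : (10 : ℚ) ^ i ≠ 0 := by positivity
    rw [hp]; field_simp
  have h2 : (10 : ℚ) ^ j * ∑ i ∈ Finset.Ioc j n, (c i : ℚ) / 10 ^ i = T c n j := by
    unfold T
    rw [Finset.mul_sum]
    apply Finset.sum_congr rfl
    intro i hi
    have hmem := Finset.mem_Ioc.mp hi
    have hp : (10 : ℚ) ^ i = 10 ^ (i - j) * 10 ^ j := by
      rw [← pow_add]; congr 1; omega
    have h10 : (10 : ℚ) ^ (i - j) ≠ 0 := by positivity
    have h10' : (10 : ℚ) ^ j ≠ 0 := by positivity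
    rw [hp]; field_simp
  rw [hsplit, mul_add, mul_add, h1, h2]
  unfold I
  push_cast
  ring

lemma floor_formula (Z : ℤ) (c : ℕ → ℕ) (n j : ℕ) (hjn : j ≤ n) :
    ⌊(10 : ℚ) ^ j * ((Z : ℚ) + ∑ i ∈ Finset.Ioc 0 n, (c i : ℚ) / 10 ^ i)⌋
      = I Z c j + ⌊T c n j⌋ := by
  rw [main_id Z c n j hjn, Int.floor_intCast_add]

lemma digq_formula (Z : ℤ) (c : ℕ → ℕ) (n j : ℕ) (h1 : 1 ≤ j) (hjn : j ≤ n) :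
    digq j ((Z : ℚ) + ∑ i ∈ Finset.Ioc 0 n, (c i : ℚ) / 10 ^ i)
      = (c j : ℤ) + ⌊T c n j⌋ - 10 * ⌊T c n (j - 1)⌋ := by
  unfold digq
  rw [floor_formula Z c n j hjn, floor_formula Z c n (j - 1) (by omega)]
  have hrec : I Z c j = 10 * I Z c (j - 1) + c j := by
    have := I_succ Z c (j - 1)
    have hj : j - 1 + 1 = j := by omega
    rwa [hj] at this
  omega

lemma digq_le_nine (j : ℕ) (h1 : 1 ≤ j) (q : ℚ) : digq j q ≤ 9 := by
  unfold digq
  have hpow : (10 : ℚ) ^ j * q = 10 * ((10 : ℚ) ^ (j - 1) * q) := by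
    conv_lhs => rw [show j = (j - 1) + 1 from by omega]
    rw [pow_succ]
    ring
  rw [hpow]
  have h2 : ⌊10 * ((10 : ℚ) ^ (j - 1) * q)⌋ < 10 * ⌊(10 : ℚ) ^ (j - 1) * q⌋ + 10 := by
    apply Int.floor_lt.mpr
    push_cast
    have := Int.lt_floor_add_one ((10 : ℚ) ^ (j - 1) * q)
    linarith
  omega

end Stmt7Aux

theorem stmt7 (x y : InfDec) (hx : x.Admissible) (hy : y.Admissible)
    (h : ∀ N : ℕ, ∃ k, N ≤ k ∧ 1 ≤ k ∧ x.d k + y.d k ≠ 9) :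
    ∀ s : ℕ, ∃ j, s ≤ j ∧ 1 ≤ j ∧ ∃ k > j, x.d k + y.d k ≠ 9 ∧
      digq j (x.trunc k + y.trunc k) ≤ 8 := by
  intro s
  classical
  obtain ⟨k1, hk1s, hk11, hck1⟩ := h (s + 1)
  obtain ⟨m, hmk1, hxm⟩ := hx (k1 + 1)
  obtain ⟨n, hnm, hn1, hcn⟩ := h (m + 1)
  set Z : ℤ := x.z + y.z with hZ
  set c : ℕ → ℕ := fun i => x.d i + y.d i with hcdef
  have hc18 : ∀ i, 1 ≤ i → c i ≤ 18 := by
    intro i hi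
    have h1 := x.d_le i hi
    have h2 := y.d_le i hi
    simp only [hcdef]; omega
  have hq : x.trunc n + y.trunc n
      = (Z : ℚ) + ∑ i ∈ Finset.Ioc 0 n, (c i : ℚ) / 10 ^ i := by
    unfold InfDec.trunc
    have hIcc : Finset.Icc 1 n = Finset.Ioc 0 n := Finset.Icc_add_one_left_eq_Ioc 0 n
    simp only [hIcc]
    have hterm : ∀ i ∈ Finset.Ioc 0 n,
        (c i : ℚ) / 10 ^ i = (x.d i : ℚ) / 10 ^ i + (y.d i : ℚ) / 10 ^ i := by
      intro i _
      simp only [hcdef]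
      push_cast
      ring
    rw [Finset.sum_congr rfl hterm, Finset.sum_add_distrib, hZ]
    push_cast
    ring
  -- the digit positions we will examine are k1 ≤ j ≤ m, with k = n
  by_cases hgood : ∃ j, k1 ≤ j ∧ j ≤ m ∧ digq j (x.trunc n + y.trunc n) ≤ 8
  · obtain ⟨j, hj1, hj2, hj3⟩ := hgood
    exact ⟨j, by omega, by omega, n, by omega, hcn, hj3⟩
  · exfalso
    push_neg at hgood
    have h9 : ∀ j, k1 ≤ j → j ≤ m →
        digq j ((Z : ℚ) + ∑ i ∈ Finset.Ioc 0 n, (c i : ℚ) / 10 ^ i) = 9 := by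
      intro j hja hjb
      have hle := Stmt7Aux.digq_le_nine j (by omega) (x.trunc n + y.trunc n)
      have hgt := hgood j hja hjb
      rw [hq] at hle hgt
      omega
    have key : ∀ t, k1 + t ≤ m →
        ⌊Stmt7Aux.T c n (k1 + t)⌋ = 1 ∧ (0 < t → c (k1 + t) = 18) := by
      intro t
      induction t with
      | zero =>
        intro ht
        have h9' := h9 k1 le_rfl (by omega)
        rw [Stmt7Aux.digq_formula Z c n k1 (by omega) (by omega)] at h9'
        have hb1 := Stmt7Aux.floorT_bounds c n k1 hc18 (by omega)
        have hb2 := Stmt7Aux.floorT_bounds c n (k1 - 1) hc18 (by omega)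
        have hcb : c k1 ≤ 18 := hc18 k1 (by omega)
        have hne : c k1 ≠ 9 := hck1
        simp only [Nat.add_zero]
        omega
      | succ t ih =>
        intro ht
        simp only [show k1 + (t + 1) = k1 + t + 1 from rfl]
        have hprev := (ih (by omega)).1
        have h9' := h9 (k1 + t + 1) (by omega) (by omega)
        rw [Stmt7Aux.digq_formula Z c n (k1 + t + 1) (by omega) (by omega)] at h9'
        have hsub : k1 + t + 1 - 1 = k1 + t := by omega
        rw [hsub, hprev] at h9'
        have hb1 := Stmt7Aux.floorT_bounds c n (k1 + t + 1) hc18 (by omega)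
        have hcb : c (k1 + t + 1) ≤ 18 := hc18 _ (by omega)
        constructor
        · omega
        · intro _
          omega
    have hfin := key (m - k1) (by omega)
    have hm18 : c m = 18 := by
      have := hfin.2 (by omega)
      rwa [show k1 + (m - k1) = m from by omega] at this
    have hym := y.d_le m (by omega)
    simp only [hcdef] at hm18
    omega
end

section
/- Let x and y be admissible infinite decimals with nonnegative integer parts, let s ≥ 0 satisfy val(x) + val(y) ≤ 10^s, and suppose there is m ≥ 0 such that θ_k(x_{k+s}·y_{k+s}) = 9 for all k > m. Then for every n > m one has T_m(x_{n+s}·y_{n+s}) = T_m(x_{m+s}·y_{m+s}), where x_j, y_j are the j-th rational truncations, T_m(q) = ⌊10^m q⌋/10^m, and θ_k(q) = ⌊10^k q⌋ − 10·⌊10^{k−1} q⌋. -/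
lemma trunc_nonneg (x : InfDec) (h : 0 ≤ x.z) (k : ℕ) : 0 ≤ x.trunc k := by
  have h1 : (0:ℚ) ≤ ∑ i ∈ Finset.Icc 1 k, (x.d i : ℚ) / 10 ^ i :=
    Finset.sum_nonneg fun i _ => by positivity
  have hz : (0:ℚ) ≤ (x.z:ℚ) := by exact_mod_cast h
  unfold InfDec.trunc
  linarith

lemma trunc_mono (x : InfDec) {a b : ℕ} (h : a ≤ b) : x.trunc a ≤ x.trunc b := by
  induction b with
  | zero => interval_cases a; exact le_refl _
  | succ b ih =>
    rcases Nat.lt_or_ge a (b+1) with h' | h'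
    · have h1 := ih (by omega)
      have h2 : (0:ℚ) ≤ (x.d (b+1):ℚ)/10^(b+1) := by positivity
      rw [trunc_succ]; linarith
    · have : a = b+1 := by omega
      rw [this]

lemma summable_digits (x : InfDec) : Summable (fun i : ℕ => (x.d (i+1) : ℝ) / 10 ^ (i+1)) := by
  have hg : Summable (fun i : ℕ => 9 * (1/10:ℝ)^i) :=
    (summable_geometric_of_lt_one (by norm_num) (by norm_num)).mul_left 9
  refine Summable.of_nonneg_of_le (fun i => by positivity) (fun i => ?_) hg
  have hd : (x.d (i+1) : ℝ) ≤ 9 := by exact_mod_cast x.d_le (i+1) (by omega)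
  have h1 : (0:ℝ) < 10 ^ (i+1) := by positivity
  rw [div_le_iff₀ h1]
  have h2 : (9:ℝ) * (1/10)^i * 10^(i+1) = 90 * ((1/10:ℝ) * 10)^i := by rw [mul_pow]; ring
  rw [h2]
  norm_num
  have := x.d_le (i+1) (by omega)
  omega

lemma trunc_le_val (x : InfDec) (k : ℕ) : ((x.trunc k : ℚ) : ℝ) ≤ x.val := by
  unfold InfDec.trunc InfDec.val
  push_cast
  have h1 : ∑ i ∈ Finset.Icc 1 k, (x.d i : ℝ) / 10 ^ i
      = ∑ i ∈ Finset.range k, (x.d (i+1) : ℝ) / 10 ^ (i+1) := by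
    induction k with
    | zero => simp
    | succ k ih => rw [Finset.sum_Icc_succ_top (by omega), Finset.sum_range_succ, ih]
  rw [h1]
  have h2 := Summable.sum_le_tsum (Finset.range k) (fun i _ => by positivity) (summable_digits x)
  linarith

theorem stmt11 (x y : InfDec) (hx : x.Admissible) (hy : y.Admissible)
    (hxz : 0 ≤ x.z) (hyz : 0 ≤ y.z) (s : ℕ) (hs : x.val + y.val ≤ 10 ^ s)
    (m : ℕ) (hm : ∀ k > m, digq k (x.trunc (k + s) * y.trunc (k + s)) = 9) :
    ∀ n > m, Tq m (x.trunc (n + s) * y.trunc (n + s))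
      = Tq m (x.trunc (m + s) * y.trunc (m + s)) := by
  intro n hn
  -- sum bound
  have hsum : ∀ a b : ℕ, x.trunc a + y.trunc b ≤ (10:ℚ)^s := by
    intro a b
    have hx' := trunc_le_val x a
    have hy' := trunc_le_val y b
    have h : ((x.trunc a + y.trunc b : ℚ) : ℝ) ≤ (10:ℝ)^s := by
      push_cast
      calc ((x.trunc a : ℚ):ℝ) + ((y.trunc b : ℚ):ℝ) ≤ x.val + y.val := by linarith
        _ ≤ (10:ℝ)^s := hs
    exact_mod_cast h
  have hPmono : ∀ K : ℕ, x.trunc (K+s) * y.trunc (K+s) ≤ x.trunc (K+1+s) * y.trunc (K+1+s) := by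
    intro K
    have hxm : x.trunc (K+s) ≤ x.trunc (K+1+s) := trunc_mono x (by omega)
    have hym : y.trunc (K+s) ≤ y.trunc (K+1+s) := trunc_mono y (by omega)
    exact mul_le_mul hxm hym (trunc_nonneg y hyz (K+s))
      (le_trans (trunc_nonneg x hxz (K+s)) hxm)
  have hdiff : ∀ K : ℕ, x.trunc (K+1+s) * y.trunc (K+1+s) - x.trunc (K+s) * y.trunc (K+s)
      ≤ 9 / 10^(K+1) := by
    intro K
    set T : ℚ := 10^(K+s+1) with hT
    have hTpos : (0:ℚ) < T := by positivity
    have hx1 : x.trunc (K+1+s) = x.trunc (K+s) + (x.d (K+s+1):ℚ)/T := by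
      rw [show K+1+s = (K+s)+1 by omega, trunc_succ]
    have hy1 : y.trunc (K+1+s) = y.trunc (K+s) + (y.d (K+s+1):ℚ)/T := by
      rw [show K+1+s = (K+s)+1 by omega, trunc_succ]
    have hdx : (x.d (K+s+1):ℚ) ≤ 9 := by exact_mod_cast x.d_le (K+s+1) (by omega)
    have hdy : (y.d (K+s+1):ℚ) ≤ 9 := by exact_mod_cast y.d_le (K+s+1) (by omega)
    have ha' : (0:ℚ) ≤ x.trunc (K+1+s) := trunc_nonneg x hxz _
    have hb : (0:ℚ) ≤ y.trunc (K+s) := trunc_nonneg y hyz _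
    have hbd : x.trunc (K+1+s) + y.trunc (K+s) ≤ (10:ℚ)^s := hsum _ _
    have h9T : (0:ℚ) ≤ 9/T := by positivity
    calc x.trunc (K+1+s) * y.trunc (K+1+s) - x.trunc (K+s) * y.trunc (K+s)
        = x.trunc (K+1+s) * (y.trunc (K+1+s) - y.trunc (K+s))
          + y.trunc (K+s) * (x.trunc (K+1+s) - x.trunc (K+s)) := by ring
      _ = x.trunc (K+1+s) * ((y.d (K+s+1):ℚ)/T) + y.trunc (K+s) * ((x.d (K+s+1):ℚ)/T) := by
          rw [hx1, hy1]; ring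
      _ ≤ x.trunc (K+1+s) * (9/T) + y.trunc (K+s) * (9/T) := by
          gcongr <;> rw [hx1]
      _ = (x.trunc (K+1+s) + y.trunc (K+s)) * (9/T) := by ring
      _ ≤ (10:ℚ)^s * (9/T) := by gcongr
      _ = 9 / 10^(K+1) := by
          rw [hT, show K+s+1 = (K+1)+s by omega, pow_add]
          field_simp
  -- main induction
  have key : ∀ k : ℕ,
      ⌊(10:ℚ)^(m+k) * (x.trunc (m+k+s) * y.trunc (m+k+s))⌋ + 1
        = 10^k * (⌊(10:ℚ)^m * (x.trunc (m+s) * y.trunc (m+s))⌋ + 1) := by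
    intro k
    induction k with
    | zero => simp
    | succ k ih =>
      set K := m + k with hK
      have hmk : m + (k+1) = K + 1 := by omega
      rw [hmk]
      have hKgt : K + 1 > m := by omega
      have h9 := hm (K+1) hKgt
      unfold digq at h9
      rw [show K+1-1 = K by omega] at h9
      have h9' : ⌊(10:ℚ)^(K+1) * (x.trunc (K+1+s) * y.trunc (K+1+s))⌋
          = 10 * ⌊(10:ℚ)^K * (x.trunc (K+1+s) * y.trunc (K+1+s))⌋ + 9 := by omega
      have hfl : ⌊(10:ℚ)^K * (x.trunc (K+1+s) * y.trunc (K+1+s))⌋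
          = ⌊(10:ℚ)^K * (x.trunc (K+s) * y.trunc (K+s))⌋ := by
        have hpK : (0:ℚ) ≤ 10^K := by positivity
        have hle : ⌊(10:ℚ)^K * (x.trunc (K+s) * y.trunc (K+s))⌋
            ≤ ⌊(10:ℚ)^K * (x.trunc (K+1+s) * y.trunc (K+1+s))⌋ :=
          Int.floor_le_floor (mul_le_mul_of_nonneg_left (hPmono K) hpK)
        by_contra hne
        have hgt : ⌊(10:ℚ)^K * (x.trunc (K+s) * y.trunc (K+s))⌋ + 1
            ≤ ⌊(10:ℚ)^K * (x.trunc (K+1+s) * y.trunc (K+1+s))⌋ := by omega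
        set B := ⌊(10:ℚ)^K * (x.trunc (K+s) * y.trunc (K+s))⌋ with hB
        have h1 : (10:ℚ) * (B + 1) + 9 ≤ 10^(K+1) * (x.trunc (K+1+s) * y.trunc (K+1+s)) := by
          have hfle := Int.floor_le ((10:ℚ)^(K+1) * (x.trunc (K+1+s) * y.trunc (K+1+s)))
          rw [h9'] at hfle
          have hc : ((B:ℚ) + 1) ≤ (⌊(10:ℚ)^K * (x.trunc (K+1+s) * y.trunc (K+1+s))⌋ : ℚ) := by
            exact_mod_cast hgt
          push_cast at hfle
          linarith
        have h2 : (10:ℚ)^(K+1) * (x.trunc (K+s) * y.trunc (K+s)) < 10 * ((B:ℚ) + 1) := by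
          have := Int.lt_floor_add_one ((10:ℚ)^K * (x.trunc (K+s) * y.trunc (K+s)))
          have h10 : (10:ℚ)^(K+1) = 10 * 10^K := by ring
          rw [h10, mul_assoc]
          have h10' : (0:ℚ) < 10 := by norm_num
          rw [← hB] at this
          nlinarith
        have h3 := hdiff K
        have h4 : (10:ℚ)^(K+1) * (x.trunc (K+1+s) * y.trunc (K+1+s))
            - 10^(K+1) * (x.trunc (K+s) * y.trunc (K+s)) ≤ 9 := by
          have hp : (0:ℚ) < 10^(K+1) := by positivity
          have := mul_le_mul_of_nonneg_left h3 hp.le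
          rw [mul_sub] at this
          rw [mul_div_cancel₀ (9:ℚ) (ne_of_gt hp)] at this
          linarith
        linarith
      rw [h9', hfl]
      have hpow : (10:ℤ)^(k+1) = 10 * 10^k := by ring
      rw [hpow, mul_assoc, ← ih]
      ring
  -- conclude
  obtain ⟨k, hk1, rfl⟩ : ∃ k, 1 ≤ k ∧ n = m + k := ⟨n - m, by omega, by omega⟩
  set A := ⌊(10:ℚ)^m * (x.trunc (m+s) * y.trunc (m+s))⌋ with hA
  have hkey := key k
  have hfloor : ⌊(10:ℚ)^m * (x.trunc (m+k+s) * y.trunc (m+k+s))⌋ = A := by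
    set q : ℚ := x.trunc (m+k+s) * y.trunc (m+k+s) with hq
    have hup : (10:ℚ)^(m+k) * q < 10^k * ((A:ℚ) + 1) := by
      have := Int.lt_floor_add_one ((10:ℚ)^(m+k) * q)
      have h := hkey
      have : (10:ℚ)^(m+k) * q < (⌊(10:ℚ)^(m+k) * q⌋ : ℚ) + 1 := Int.lt_floor_add_one _
      calc (10:ℚ)^(m+k) * q < (⌊(10:ℚ)^(m+k) * q⌋ : ℚ) + 1 := this
        _ = ((⌊(10:ℚ)^(m+k) * q⌋ + 1 : ℤ) : ℚ) := by push_cast; ring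
        _ = ((10^k * (A + 1) : ℤ) : ℚ) := by rw [hkey]
        _ = 10^k * ((A:ℚ) + 1) := by push_cast; ring
    have hlo : 10^k * ((A:ℚ) + 1) - 1 ≤ (10:ℚ)^(m+k) * q := by
      have h := Int.floor_le ((10:ℚ)^(m+k) * q)
      have h2 : ((⌊(10:ℚ)^(m+k) * q⌋ : ℤ) : ℚ) = 10^k * ((A:ℚ) + 1) - 1 := by
        have : (⌊(10:ℚ)^(m+k) * q⌋ : ℤ) = 10^k * (A + 1) - 1 := by omega
        rw [this]; push_cast; ring
      rw [h2] at h
      exact h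
    have hpk : (1:ℚ) ≤ 10^k := by
      calc (1:ℚ) = 1^k := (one_pow k).symm
        _ ≤ 10^k := by gcongr <;> norm_num
    have hpm : (0:ℚ) < 10^m := by positivity
    have hpk' : (0:ℚ) < 10^k := by positivity
    have hmk : (10:ℚ)^(m+k) = 10^m * 10^k := pow_add 10 m k
    rw [Int.floor_eq_iff]
    constructor
    · -- A ≤ 10^m q
      have : 10^k * ((A:ℚ) + 1) - 1 ≤ 10^m * 10^k * q := by rw [← hmk]; exact hlo
      nlinarith
    · have : (10:ℚ)^m * 10^k * q < 10^k * ((A:ℚ)+1) := by rw [← hmk]; exact hup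
      nlinarith
  unfold Tq
  rw [hfloor, ← hA]
end

section
/- Let x and y be admissible infinite decimals with nonnegative integer parts, let s ≥ 0 satisfy val(x) + val(y) ≤ 10^s, and suppose there is m ≥ 0 such that θ_k(x_{k+s}·y_{k+s}) = 9 for all k > m. Then val(x)·val(y) = T_m(x_{m+s}·y_{m+s}) + 10^{-m}, where x_j, y_j are the j-th rational truncations, T_m(q) = ⌊10^m q⌋/10^m, and θ_k(q) = ⌊10^k q⌋ − 10·⌊10^{k−1} q⌋. -/
namespace InfDec

lemma trunc_zero (x : InfDec) : x.trunc 0 = (x.z : ℚ) := by simp [trunc]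

lemma trunc_succ (x : InfDec) (j : ℕ) :
    x.trunc (j+1) = x.trunc j + (x.d (j+1) : ℚ) / 10 ^ (j+1) := by
  rw [trunc, trunc, Finset.sum_Icc_succ_top (Nat.succ_le_succ (Nat.zero_le j))]
  ring

lemma trunc_eq_range (x : InfDec) (j : ℕ) :
    x.trunc j = (x.z : ℚ) + ∑ i ∈ Finset.range j, (x.d (i+1) : ℚ) / 10 ^ (i+1) := by
  induction j with
  | zero => simp [trunc_zero]
  | succ n ih => rw [trunc_succ, ih, Finset.sum_range_succ]; ring

lemma trunc_nonneg (x : InfDec) (hz : 0 ≤ x.z) (j : ℕ) : 0 ≤ x.trunc j := by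
  rw [trunc]
  have h0 : (0:ℚ) ≤ (x.z : ℚ) := by exact_mod_cast hz
  exact add_nonneg h0 (Finset.sum_nonneg fun i _ => by positivity)

lemma trunc_mono (x : InfDec) : Monotone x.trunc := by
  apply monotone_nat_of_le_succ
  intro n
  rw [trunc_succ]
  have h0 : (0:ℚ) ≤ (x.d (n+1) : ℚ) / 10 ^ (n+1) := by positivity
  linarith

lemma summable_digits (x : InfDec) :
    Summable (fun i : ℕ => (x.d (i+1) : ℝ) / 10 ^ (i+1)) := by
  refine Summable.of_nonneg_of_le (f := fun i : ℕ => (9/10 : ℝ) * (1/10 : ℝ) ^ i)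
    (fun i => by positivity) (fun i => ?_) ?_
  · 
    have hd : (x.d (i+1) : ℝ) ≤ 9 := by
      exact_mod_cast x.d_le (i+1) (Nat.succ_le_succ (Nat.zero_le i))
    rw [div_eq_mul_inv]
    have : ((10:ℝ) ^ (i+1))⁻¹ = (1/10) * (1/10)^i := by
      rw [pow_succ]; field_simp; rw [← mul_pow]; norm_num
    rw [this]
    nlinarith [pow_pos (by norm_num : (0:ℝ) < 1/10) i, pow_nonneg (by norm_num : (0:ℝ) ≤ 1/10) i]
  · exact (summable_geometric_of_lt_one (by norm_num) (by norm_num)).mul_left _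

lemma trunc_le_val (x : InfDec) (j : ℕ) : (x.trunc j : ℝ) ≤ x.val := by
  rw [trunc_eq_range, val]
  push_cast
  gcongr
  exact Summable.sum_le_tsum (Finset.range j) (fun i _ => by positivity) x.summable_digits

lemma val_nonneg (x : InfDec) (hz : 0 ≤ x.z) : 0 ≤ x.val := by
  have h := x.trunc_le_val 0
  rw [trunc_zero] at h
  have : (0:ℝ) ≤ (x.z : ℝ) := by exact_mod_cast hz
  push_cast at h
  linarith

lemma tsum_tail (j : ℕ) : ∑' i : ℕ, (9:ℝ)/10^(i+j+1) = 1/10^j := by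
  have : ∀ i : ℕ, (9:ℝ)/10^(i+j+1) = (9/10^(j+1)) * (1/10:ℝ)^i := by
    intro i
    rw [pow_add, pow_add, pow_one, div_pow, one_pow]
    field_simp
    ring
  rw [tsum_congr this, tsum_mul_left, tsum_geometric_of_lt_one (by norm_num) (by norm_num)]
  rw [pow_succ]
  norm_num
  ring

lemma nine_pow (j i : ℕ) : (9:ℝ)/10^(i+j+1) = (9/10^(j+1)) * (1/10:ℝ)^i := by
  rw [pow_add, pow_add, pow_one, div_pow, one_pow]
  field_simp
  ring

lemma val_lt_trunc_add (x : InfDec) (hx : x.Admissible) (j : ℕ) :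
    x.val < (x.trunc j : ℝ) + 1/10^j := by
  obtain ⟨k, hk, hk9⟩ := hx (j+1)
  have hsum := x.summable_digits
  have hsplit : ∑ i ∈ Finset.range j, (x.d (i+1) : ℝ)/10^(i+1)
      + ∑' i : ℕ, (x.d (i+j+1) : ℝ)/10^(i+j+1)
      = ∑' i : ℕ, (x.d (i+1) : ℝ)/10^(i+1) :=
    Summable.sum_add_tsum_nat_add (f := fun i : ℕ => (x.d (i+1) : ℝ)/10^(i+1)) j hsum
  have htail : (∑' i : ℕ, (x.d (i+j+1) : ℝ)/10^(i+j+1)) < 1/10^j := by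
    rw [← tsum_tail j]
    apply Summable.tsum_lt_tsum_of_nonneg (i := k - (j+1))
    · intro b; positivity
    · intro b
      have hd : (x.d (b+j+1) : ℝ) ≤ 9 := by
        exact_mod_cast x.d_le (b+j+1) (by omega)
      gcongr
    · have hkj : k - (j+1) + j + 1 = k := by omega
      rw [hkj]
      have h9 : (x.d k : ℝ) < 9 := by exact_mod_cast hk9
      gcongr
    · exact ((summable_geometric_of_lt_one (by norm_num) (by norm_num)).mul_left
        ((9:ℝ)/10^(j+1))).congr (fun i => (nine_pow j i).symm)
  rw [trunc_eq_range, val]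
  push_cast
  linarith [htail, hsplit]

lemma trunc_den (x : InfDec) (j : ℕ) : ∃ n : ℤ, (10:ℚ)^j * x.trunc j = (n:ℚ) := by
  induction j with
  | zero => exact ⟨x.z, by simp [trunc_zero]⟩
  | succ n ih =>
    obtain ⟨a, ha⟩ := ih
    refine ⟨10*a + x.d (n+1), ?_⟩
    have h2 : (10:ℚ)^(n+1) * ((x.d (n+1):ℚ)/10^(n+1)) = (x.d (n+1):ℚ) := by
      field_simp
    rw [trunc_succ, mul_add, h2]
    push_cast
    linear_combination (10:ℚ) * ha

end InfDec

lemma floor_den_bound (N : ℤ) (D : ℕ) (r : ℚ) (h : r * 10^D = (N:ℚ)) :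
    r ≤ (⌊r⌋ : ℚ) + 1 - 1/10^D := by
  have h1 : r < ⌊r⌋ + 1 := Int.lt_floor_add_one r
  have hD : (0:ℚ) < 10^D := by positivity
  have h2 : (N:ℚ) < ((⌊r⌋:ℚ) + 1) * 10^D := by nlinarith
  have h3 : N < (⌊r⌋ + 1) * 10^D := by exact_mod_cast h2
  have h4 : N ≤ (⌊r⌋ + 1) * 10^D - 1 := by omega
  have h5 : r * 10^D ≤ ((⌊r⌋:ℚ) + 1) * 10^D - 1 := by rw [h]; exact_mod_cast h4
  have hexp : ((⌊r⌋:ℚ) + 1 - 1/10^D) * 10^D = ((⌊r⌋:ℚ)+1)*10^D - 1 := by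
    field_simp
  have key : r * 10^D ≤ ((⌊r⌋:ℚ) + 1 - 1/10^D) * 10^D := by rw [hexp]; linarith
  exact le_of_mul_le_mul_right key hD

lemma le_of_forall_le_add_pow {A B : ℝ} (h : ∀ n : ℕ, A ≤ B + (1/10)^n) : A ≤ B := by
  by_contra hc
  push_neg at hc
  obtain ⟨n, hn⟩ := exists_pow_lt_of_lt_one (by linarith : (0:ℝ) < A - B)
    (by norm_num : (1/10:ℝ) < 1)
  linarith [h n]

theorem stmt15 (x y : InfDec) (hx : x.Admissible) (hy : y.Admissible)
    (hxz : 0 ≤ x.z) (hyz : 0 ≤ y.z) (s : ℕ) (hs : x.val + y.val ≤ 10 ^ s)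
    (m : ℕ) (hm : ∀ k > m, digq k (x.trunc (k + s) * y.trunc (k + s)) = 9) :
    x.val * y.val = (Tq m (x.trunc (m + s) * y.trunc (m + s)) : ℝ) + 1 / 10 ^ m := by
  set q : ℕ → ℚ := fun k => x.trunc (k+s) * y.trunc (k+s) with hqdef
  set a : ℕ → ℤ := fun k => ⌊(10:ℚ)^k * q k⌋ with hadef
  have hxval0 : (0:ℝ) ≤ x.val := x.val_nonneg hxz
  have hyval0 : (0:ℝ) ≤ y.val := y.val_nonneg hyz
  have hq_le_P : ∀ k, (q k : ℝ) ≤ x.val * y.val := by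
    intro k
    have : (q k : ℝ) = (x.trunc (k+s) : ℝ) * (y.trunc (k+s) : ℝ) := by push_cast [hqdef]; ring
    rw [this]
    exact mul_le_mul (x.trunc_le_val _) (y.trunc_le_val _)
      (by exact_mod_cast y.trunc_nonneg hyz _) hxval0
  have ht_le_q : ∀ k, (a k : ℚ) / 10^k ≤ q k := by
    intro k
    rw [div_le_iff₀ (by positivity : (0:ℚ) < 10^k)]
    have h := Int.floor_le ((10:ℚ)^k * q k)
    calc (a k : ℚ) ≤ 10^k * q k := h
      _ = q k * 10^k := by ring
  -- Upper bound: P < a k / 10^k + 2/10^k for every k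
  have hC : ∀ k, x.val * y.val < (a k : ℝ)/10^k + 2/10^k := by
    intro k
    have hx' := x.val_lt_trunc_add hx (k+s)
    have hy' := y.val_lt_trunc_add hy (k+s)
    have hxt : (x.trunc (k+s) : ℝ) ≤ x.val := x.trunc_le_val _
    have hyt : (y.trunc (k+s) : ℝ) ≤ y.val := y.trunc_le_val _
    have hxt0 : (0:ℝ) ≤ (x.trunc (k+s) : ℝ) := by exact_mod_cast x.trunc_nonneg hxz _
    have hyt0 : (0:ℝ) ≤ (y.trunc (k+s) : ℝ) := by exact_mod_cast y.trunc_nonneg hyz _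
    have he : (0:ℝ) < 1/10^(k+s) := by positivity
    have hstep : x.val * y.val <
        ((x.trunc (k+s):ℝ) + 1/10^(k+s)) * ((y.trunc (k+s):ℝ) + 1/10^(k+s)) := by
      nlinarith
    -- denominator bound for q k
    obtain ⟨nx, hnx⟩ := x.trunc_den (k+s)
    obtain ⟨ny, hny⟩ := y.trunc_den (k+s)
    have hpow : (10:ℚ)^k * 10^(k+2*s) = 10^(k+s) * 10^(k+s) := by
      rw [← pow_add, ← pow_add]
      congr 1
      ring
    have hprod : (10:ℚ)^k * q k * 10^(k+2*s) = ((nx * ny : ℤ) : ℚ) := by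
      have h1 : (10:ℚ)^k * q k * 10^(k+2*s)
          = ((10:ℚ)^(k+s) * x.trunc (k+s)) * ((10:ℚ)^(k+s) * y.trunc (k+s)) := by
        simp only [hqdef]
        linear_combination (x.trunc (k+s) * y.trunc (k+s)) * hpow
      rw [h1, hnx, hny]
      push_cast
      ring
    have hqb : (10:ℚ)^k * q k ≤ ((a k : ℚ)) + 1 - 1/10^(k+2*s) :=
      floor_den_bound (nx*ny) (k+2*s) _ hprod
    have hAk : (0:ℝ) < (10:ℝ)^k := by positivity
    have hqb'' : q k ≤ ((a k:ℚ) + 1 - 1/10^(k+2*s))/10^k := by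
      rw [le_div_iff₀ (by positivity : (0:ℚ) < 10^k)]
      nlinarith [hqb]
    have hqb' : (q k : ℝ) ≤ ((a k:ℝ) + 1 - 1/10^(k+2*s))/10^k := by
      have hc := (Rat.cast_le (K := ℝ)).mpr hqb''
      push_cast at hc
      exact hc
    -- power identities in ℝ
    have hE1 : (10:ℝ)^(k+s) = 10^k * 10^s := pow_add 10 k s
    have hF : (10:ℝ)^(k+2*s) = 10^k * (10^s * 10^s) := by
      rw [show k+2*s = k+s+s by ring, pow_add, pow_add]
      ring
    have hs10 : (0:ℝ) < (10:ℝ)^s := by positivity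
    have htsum : (x.trunc (k+s):ℝ) + (y.trunc (k+s):ℝ) ≤ 10^s := by
      have : x.val + y.val ≤ (10:ℝ)^s := by exact_mod_cast hs
      linarith
    calc x.val * y.val
        < ((x.trunc (k+s):ℝ) + 1/10^(k+s)) * ((y.trunc (k+s):ℝ) + 1/10^(k+s)) := hstep
      _ = (q k : ℝ) + ((x.trunc (k+s):ℝ) + (y.trunc (k+s):ℝ)) * (1/10^(k+s))
          + (1/10^(k+s)) * (1/10^(k+s)) := by
            have : (q k : ℝ) = (x.trunc (k+s) : ℝ) * (y.trunc (k+s) : ℝ) := by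
              push_cast [hqdef]; ring
            rw [this]; ring
      _ ≤ (q k : ℝ) + (10:ℝ)^s * (1/10^(k+s)) + (1/10^(k+s)) * (1/10^(k+s)) := by gcongr
      _ = (q k : ℝ) + 1/10^k + 1/10^(k+2*s) * (1/10^k) * (10:ℝ)^k * (1/10^k) := by
            rw [hE1, hF]; field_simp
      _ = (q k : ℝ) + 1/10^k + 1/10^(k+2*s) * (1/10^k) := by
            field_simp
      _ ≤ ((a k:ℝ) + 1 - 1/10^(k+2*s))/10^k + 1/10^k + 1/10^(k+2*s) * (1/10^k) := by gcongr
      _ = (a k : ℝ)/10^k + 2/10^k := by field_simp; ring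
  -- digit condition
  have hA9 : ∀ k, m ≤ k → a (k+1) = 10 * ⌊(10:ℚ)^k * q (k+1)⌋ + 9 := by
    intro k hk
    have h := hm (k+1) (by omega)
    rw [digq] at h
    simp only [Nat.add_sub_cancel] at h
    rw [show x.trunc (k+1+s) * y.trunc (k+1+s) = q (k+1) from rfl] at h
    have hrfl : a (k+1) = ⌊(10:ℚ)^(k+1) * q (k+1)⌋ := rfl
    omega
  have hmono : ∀ k, q k ≤ q (k+1) := by
    intro k
    simp only [hqdef]
    exact mul_le_mul (x.trunc_mono (by omega)) (y.trunc_mono (by omega))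
      (y.trunc_nonneg hyz _) (x.trunc_nonneg hxz _)
  have hstep9 : ∀ k, m ≤ k → 10 * (a k + 1) ≤ a (k+1) + 1 := by
    intro k hk
    have h9 := hA9 k hk
    have hfl : a k ≤ ⌊(10:ℚ)^k * q (k+1)⌋ := by
      apply Int.floor_le_floor
      have := hmono k
      have hp : (0:ℚ) ≤ (10:ℚ)^k := by positivity
      nlinarith
    omega
  have hchain : ∀ j, m ≤ j → ∀ n : ℕ, 10^n * (a j + 1) ≤ a (j+n) + 1 := by
    intro j hj n
    induction n with
    | zero => simp
    | succ n ih =>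
      have h1 := hstep9 (j+n) (by omega)
      calc (10:ℤ)^(n+1) * (a j + 1) = 10 * ((10:ℤ)^n * (a j + 1)) := by ring
        _ ≤ 10 * (a (j+n) + 1) := by linarith
        _ ≤ a (j+n+1) + 1 := h1
        _ = a (j+(n+1)) + 1 := by ring_nf
  have hB : ∀ j, m ≤ j → (a j:ℝ)/10^j + 1/10^j ≤ x.val * y.val := by
    intro j hj
    apply le_of_forall_le_add_pow
    intro n
    have hch : ((10:ℝ)^n * ((a j:ℝ) + 1)) ≤ (a (j+n):ℝ) + 1 := by
      exact_mod_cast hchain j hj n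
    have hp1 : (0:ℝ) < (10:ℝ)^(j+n) := by positivity
    have hpj : (0:ℝ) < (10:ℝ)^j := by positivity
    have hpn : (0:ℝ) < (10:ℝ)^n := by positivity
    have h1 : ((10:ℝ)^n * ((a j:ℝ) + 1) - 1) / 10^(j+n) ≤ (a (j+n):ℝ)/10^(j+n) := by
      gcongr
      · linarith
    have h2 : ((10:ℝ)^n * ((a j:ℝ) + 1) - 1) / 10^(j+n)
        = (a j:ℝ)/10^j + 1/10^j - 1/10^(j+n) := by
      rw [pow_add]
      field_simp
    have h3 : (a (j+n):ℝ)/10^(j+n) ≤ (q (j+n) : ℝ) := by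
      exact_mod_cast ht_le_q (j+n)
    have h4 : (1:ℝ)/10^(j+n) ≤ (1/10)^n := by
      rw [div_pow, one_pow]
      apply div_le_div_of_nonneg_left (by norm_num) hpn
      exact pow_le_pow_right₀ (by norm_num) (by omega)
    have h5 := hq_le_P (j+n)
    linarith
  -- no carry
  have hD : ∀ k, m ≤ k → a (k+1) + 1 ≤ 10*(a k + 1) := by
    intro k hk
    by_contra hcon
    push_neg at hcon
    have h9 := hA9 k hk
    have hbk : a k + 1 ≤ ⌊(10:ℚ)^k * q (k+1)⌋ := by omega
    have h19 : 10 * (a k) + 19 ≤ a (k+1) := by omega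
    have hBk := hB (k+1) (by omega)
    have hCk := hC k
    have hpk : (0:ℝ) < (10:ℝ)^k := by positivity
    have hcast : (10:ℝ) * (a k:ℝ) + 19 ≤ (a (k+1):ℝ) := by exact_mod_cast h19
    have hrw : ((10:ℝ) * (a k:ℝ) + 19)/10^(k+1) + 1/10^(k+1)
        = (a k:ℝ)/10^k + 2/10^k := by
      rw [pow_succ]
      field_simp
      ring
    have hmono2 : ((10:ℝ) * (a k:ℝ) + 19)/10^(k+1) ≤ (a (k+1):ℝ)/10^(k+1) := by
      gcongr
    linarith
  -- exact recurrence
  have heqs : ∀ k, m ≤ k → a (k+1) + 1 = 10 * (a k + 1) := by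
    intro k hk
    have := hstep9 k hk
    have := hD k hk
    omega
  have heq : ∀ n : ℕ, a (m+n) + 1 = 10^n * (a m + 1) := by
    intro n
    induction n with
    | zero => simp
    | succ n ih =>
      have h1 := heqs (m+n) (by omega)
      calc a (m+(n+1)) + 1 = a ((m+n)+1) + 1 := by ring_nf
        _ = 10 * (a (m+n) + 1) := h1
        _ = 10 * (10^n * (a m + 1)) := by rw [ih]
        _ = 10^(n+1) * (a m + 1) := by ring
  -- conclude
  have hlow : (a m:ℝ)/10^m + 1/10^m ≤ x.val * y.val := hB m le_rfl
  have hup : x.val * y.val ≤ (a m:ℝ)/10^m + 1/10^m := by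
    apply le_of_forall_le_add_pow
    intro n
    have hCn := hC (m+n)
    have heqn : (a (m+n):ℝ) + 1 = 10^n * ((a m:ℝ) + 1) := by
      exact_mod_cast heq n
    have hpm : (0:ℝ) < (10:ℝ)^m := by positivity
    have hpn : (0:ℝ) < (10:ℝ)^n := by positivity
    have hrw : (a (m+n):ℝ)/10^(m+n) + 2/10^(m+n)
        = (a m:ℝ)/10^m + 1/10^m + 1/10^(m+n) := by
      have : (a (m+n):ℝ) = 10^n * ((a m:ℝ) + 1) - 1 := by linarith
      rw [this, pow_add]
      field_simp
      ring
    have h4 : (1:ℝ)/10^(m+n) ≤ (1/10)^n := by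
      rw [div_pow, one_pow]
      apply div_le_div_of_nonneg_left (by norm_num) hpn
      exact pow_le_pow_right₀ (by norm_num) (by omega)
    linarith
  have hTq : (Tq m (q m) : ℝ) = (a m:ℝ)/10^m := by
    rw [Tq]
    simp only [hadef]
    push_cast
    ring
  rw [hTq]
  linarith
end

section
/- Let x = (z, d) be an infinite decimal whose rational truncations satisfy x_k² < 2 < (x_k + 10^{-k})² for every k ≥ 0. Then for every k ≥ 1 one has 2 − 5·10^{-(k+1)} ≤ x_{k+1}² < 2; consequently T_k(x_{k+1}²) = 2 − 10^{-k} and θ_k(x_{k+1}²) = 9, where T_m(q) = ⌊10^m q⌋/10^m and θ_m(q) = ⌊10^m q⌋ − 10·⌊10^{m−1} q⌋. -/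
lemma key_ineq (t ε : ℚ) (hε : 0 < ε) (hε1 : ε ≤ 1) (h1 : t^2 < 2)
    (h2 : 2 < (t + ε)^2) : 2 - 5*ε ≤ t^2 := by
  have ht32 : t < 3/2 := by nlinarith
  nlinarith [mul_nonneg hε.le (show (0:ℚ) ≤ 5 - 2*t - ε by linarith)]

lemma floor_helper (m : ℕ) (q : ℚ) (h1 : (2:ℚ)*10^m - 1 ≤ 10^m * q)
    (h2 : (10:ℚ)^m * q < 2*10^m) : ⌊(10:ℚ)^m * q⌋ = 2*10^m - 1 := by
  rw [Int.floor_eq_iff]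
  constructor
  · push_cast; linarith
  · push_cast; linarith

theorem stmt17 (x : InfDec)
    (h : ∀ k : ℕ, (x.trunc k) ^ 2 < 2 ∧ 2 < (x.trunc k + 1 / 10 ^ k) ^ 2) :
    ∀ k, 1 ≤ k →
      (2 - 5 / 10 ^ (k + 1) ≤ (x.trunc (k + 1)) ^ 2 ∧ (x.trunc (k + 1)) ^ 2 < 2) ∧
      Tq k ((x.trunc (k + 1)) ^ 2) = 2 - 1 / 10 ^ k ∧
      digq k ((x.trunc (k + 1)) ^ 2) = 9 := by
  intro k hk
  obtain ⟨m, rfl⟩ := Nat.exists_eq_add_of_le hk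
  set k := 1 + m with hkdef
  obtain ⟨h1, h2⟩ := h (k+1)
  set t := x.trunc (k+1) with ht
  clear_value k t
  have hε : (0:ℚ) < 1/10^(k+1) := by positivity
  have hε1 : (1:ℚ)/10^(k+1) ≤ 1 := by
    rw [div_le_one (by positivity)]
    exact one_le_pow₀ (by norm_num)
  have hlow : 2 - 5/10^(k+1) ≤ t^2 := by
    have := key_ineq t (1/10^(k+1)) hε hε1 h1 h2
    have e : (5:ℚ)*(1/10^(k+1)) = 5/10^(k+1) := by ring
    linarith [e ▸ this]
  have hpk : (0:ℚ) < 10^k := by positivity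
  have hkey : (5:ℚ)/10^(k+1) * 10^k = 1/2 := by
    rw [pow_succ]; field_simp; ring
  have hf1 : ⌊(10:ℚ)^k * t^2⌋ = 2*10^k - 1 := by
    apply floor_helper
    · nlinarith
    · nlinarith
  have hm : k - 1 = m := by omega
  have hkm : k = m + 1 := by omega
  have hpm : (0:ℚ) < 10^m := by positivity
  have hkey2 : (5:ℚ)/10^(k+1) * 10^m = 1/20 := by
    rw [hkm]; field_simp; ring
  have hf2 : ⌊(10:ℚ)^m * t^2⌋ = 2*10^m - 1 := by
    apply floor_helper
    · nlinarith
    · nlinarith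
  refine ⟨⟨hlow, h1⟩, ?_, ?_⟩
  · unfold Tq
    rw [hf1]
    field_simp
    push_cast; ring
  · unfold digq
    rw [hm, hf1, hf2, hkm]
    ring
end

section
/- Let x = (z, d) be an infinite decimal whose rational truncations satisfy x_k² < 2 < (x_k + 10^{-k})² for every k ≥ 0. Then val(x)² = 2, i.e., the real value of x is √2. -/
theorem stmt18 (x : InfDec)
    (h : ∀ k : ℕ, (x.trunc k) ^ 2 < 2 ∧ 2 < (x.trunc k + 1 / 10 ^ k) ^ 2) :
    x.val ^ 2 = 2 := by
  set s := Real.sqrt 2 with hsdef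
  have hs2 : s ^ 2 = 2 := Real.sq_sqrt (by norm_num)
  have hs0 : 0 ≤ s := Real.sqrt_nonneg 2
  set f : ℕ → ℝ := fun i => (x.d (i + 1) : ℝ) / 10 ^ (i + 1) with hf
  have hfnn : ∀ i, 0 ≤ f i := fun i => by positivity
  have hfle : ∀ i, f i ≤ 9 / 10 ^ (i + 1) := by
    intro i
    have hd : (x.d (i + 1) : ℝ) ≤ 9 := by
      exact_mod_cast x.d_le (i + 1) (Nat.le_add_left 1 i)
    simp only [hf]
    gcongr
  have hg : Summable (fun i : ℕ => (9:ℝ) / 10 ^ (i + 1)) := by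
    have := (summable_geometric_of_lt_one (by norm_num : (0:ℝ) ≤ 1/10)
      (by norm_num : (1:ℝ)/10 < 1)).mul_left (9/10)
    refine this.congr fun i => ?_
    rw [pow_succ, div_pow, one_pow]
    field_simp
  have hsum : Summable f := Summable.of_nonneg_of_le hfnn hfle hg
  have hval : x.val = (x.z : ℝ) + ∑' i, f i := rfl
  have htr : ∀ k, ((x.trunc k : ℚ) : ℝ) = (x.z : ℝ) + ∑ i ∈ Finset.range k, f i := by
    intro k
    rw [InfDec.trunc]
    push_cast
    congr 1
    rw [show Finset.Icc 1 k = Finset.Ico 1 (k + 1) by rw [Finset.Ico_add_one_right_eq_Icc],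
      Finset.sum_Ico_eq_sum_range]
    simp only [Nat.add_sub_cancel]
    exact Finset.sum_congr rfl fun i _ => by rw [add_comm 1 i]
  have hdecomp : ∀ k, x.val = ((x.trunc k : ℚ) : ℝ) + ∑' i, f (i + k) := by
    intro k
    rw [htr, hval, ← hsum.sum_add_tsum_nat_add k]
    ring
  have htail_nn : ∀ k, 0 ≤ ∑' i, f (i + k) := fun k => tsum_nonneg fun i => hfnn _
  have htail_le : ∀ k, ∑' i, f (i + k) ≤ 1 / 10 ^ k := by
    intro k
    have h1 : ∑' i, f (i + k) ≤ ∑' i : ℕ, (9:ℝ) / 10 ^ (i + k + 1) := by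
      refine Summable.tsum_le_tsum (fun i => hfle (i + k))
        ((summable_nat_add_iff k).mpr hsum) ?_
      have := (summable_geometric_of_lt_one (by norm_num : (0:ℝ) ≤ 1/10)
        (by norm_num : (1:ℝ)/10 < 1)).mul_left ((9:ℝ) / 10 ^ (k + 1))
      refine this.congr fun i => ?_
      rw [pow_add, pow_succ, div_pow, one_pow]
      field_simp
      ring
    have h2 : ∑' i : ℕ, (9:ℝ) / 10 ^ (i + k + 1) = 1 / 10 ^ k := by
      have heq : ∀ i : ℕ, (9:ℝ) / 10 ^ (i + k + 1) = (9 / 10 ^ (k + 1)) * (1/10) ^ i := by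
        intro i
        rw [pow_add, pow_succ, div_pow, one_pow]
        field_simp
        ring
      rw [tsum_congr heq, tsum_mul_left,
        tsum_geometric_of_lt_one (by norm_num) (by norm_num), pow_succ]
      field_simp
      ring
    linarith [h1, h2.le]
  have hbound : ∀ k : ℕ, |x.val - s| ≤ 2 / 10 ^ k := by
    intro k
    obtain ⟨h1, h2⟩ := h k
    have h1' : ((x.trunc k : ℚ) : ℝ) ^ 2 < 2 := by exact_mod_cast h1
    have h2' : (2:ℝ) < (((x.trunc k : ℚ) : ℝ) + 1 / 10 ^ k) ^ 2 := by
      have h2r : ((x.trunc k + 1 / 10 ^ k : ℚ) : ℝ) ^ 2 > 2 := by exact_mod_cast h2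
      push_cast at h2r
      convert h2r using 2
    set t : ℝ := ((x.trunc k : ℚ) : ℝ) with ht
    have hp : (0:ℝ) < 1 / 10 ^ k := by positivity
    have hlt : t < s := by nlinarith [sq_nonneg (t - s), sq_nonneg (t + s)]
    have hneg : -s < t := by nlinarith [sq_nonneg (s + t), sq_nonneg (s - t)]
    have hsb : 0 < s + (t + 1 / 10 ^ k) := by linarith
    have hgt : s < t + 1 / 10 ^ k := by nlinarith
    have hv := hdecomp k
    rw [← ht] at hv
    have hn := htail_nn k
    have hl := htail_le k
    have he : (2:ℝ) / 10 ^ k = 1 / 10 ^ k + 1 / 10 ^ k := by ring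
    rw [abs_le, hv, he]
    constructor <;> linarith
  have htend : Filter.Tendsto (fun k : ℕ => (2:ℝ) / 10 ^ k) Filter.atTop (nhds 0) := by
    have h1 := tendsto_pow_atTop_nhds_zero_of_lt_one
      (by norm_num : (0:ℝ) ≤ 1/10) (by norm_num : (1:ℝ)/10 < 1)
    have h2 := h1.const_mul (2:ℝ)
    simp only [mul_zero] at h2
    refine h2.congr fun k => ?_
    rw [div_pow, one_pow, div_eq_mul_inv, div_eq_mul_inv, one_mul]
  have habs : |x.val - s| ≤ 0 := ge_of_tendsto' htend hbound
  have hvs : x.val = s := by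
    have h0 : |x.val - s| = 0 := le_antisymm habs (abs_nonneg _)
    have := abs_eq_zero.mp h0
    linarith
  rw [hvs, hs2]
end

section
/- Let x be an admissible infinite decimal with val(x) > 0, and let y be an infinite decimal whose rational truncations satisfy val(x)·y_k ≤ 1 < val(x)·(y_k + 10^{-k}) for every k ≥ 0. Then val(x)·val(y) = 1, i.e., y represents the reciprocal of x. -/
lemma summable_dig (y : InfDec) :
    Summable (fun i : ℕ => (y.d (i + 1) : ℝ) / 10 ^ (i + 1)) := by
  refine Summable.of_nonneg_of_le (fun i => by positivity) (fun i => ?_)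
    ((summable_geometric_of_lt_one (by norm_num) (by norm_num) :
      Summable fun i : ℕ => (1/10 : ℝ) ^ i).mul_left (9/10))
  have hd : (y.d (i+1) : ℝ) ≤ 9 := by exact_mod_cast y.d_le (i+1) (Nat.le_add_left 1 i)
  have hp : (1/10:ℝ)^i * 10^(i+1) = 10 := by
    rw [pow_succ, ← mul_assoc, ← mul_pow]; norm_num
  rw [div_le_iff₀ (by positivity)]
  calc (y.d (i+1) : ℝ) ≤ 9 := hd
  _ = (9/10) * ((1/10:ℝ)^i * 10^(i+1)) := by rw [hp]; norm_num
  _ = (9/10) * (1/10:ℝ)^i * 10^(i+1) := by ring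

lemma trunc_le_val_s19 (y : InfDec) (k : ℕ) :
    ((y.trunc k : ℚ) : ℝ) ≤ y.val ∧ y.val ≤ ((y.trunc k : ℚ) : ℝ) + 1 / 10 ^ k := by
  set g : ℕ → ℝ := fun i => (y.d (i + 1) : ℝ) / 10 ^ (i + 1) with hg
  have hsum : Summable g := summable_dig y
  have htr : ((y.trunc k : ℚ) : ℝ) = (y.z : ℝ) + ∑ i ∈ Finset.range k, g i := by
    rw [InfDec.trunc]
    push_cast
    congr 1
    rw [← Finset.Ico_add_one_right_eq_Icc, Finset.sum_Ico_eq_sum_range]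
    simp [hg, add_comm 1]
  have hsplit := Summable.sum_add_tsum_nat_add k hsum
  have hval : y.val = (y.z : ℝ) + (∑ i ∈ Finset.range k, g i + ∑' i, g (i + k)) := by
    rw [InfDec.val, ← hsplit]
  constructor
  · rw [htr, hval]
    have : 0 ≤ ∑' i, g (i + k) := tsum_nonneg (fun i => by positivity)
    linarith
  · rw [htr, hval]
    have htail : ∑' i, g (i + k) ≤ 1 / 10 ^ k := by
      have hb : ∀ i : ℕ, g (i + k) ≤ (9 / 10 ^ (k+1)) * (1/10 : ℝ) ^ i := by
        intro i
        have hd : (y.d (i+k+1) : ℝ) ≤ 9 := by exact_mod_cast y.d_le _ (Nat.le_add_left 1 _)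
        simp only [hg]
        have hp : (1/10:ℝ)^i * 10 ^ (i+k+1) = 10 ^ (k+1) := by
          have : (i:ℕ)+k+1 = i+(k+1) := by ring
          rw [this, pow_add, ← mul_assoc, ← mul_pow]; norm_num
        rw [div_le_iff₀ (by positivity)]
        calc (y.d (i+k+1) : ℝ) ≤ 9 := hd
        _ = 9 / 10 ^ (k+1) * ((1/10:ℝ)^i * 10 ^ (i + k + 1)) := by
            rw [hp]; field_simp
        _ = 9 / 10 ^ (k+1) * (1/10:ℝ)^i * 10 ^ (i + k + 1) := by ring
      have hgs : Summable (fun i : ℕ => (9 / 10 ^ (k+1)) * (1/10 : ℝ) ^ i) :=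
        (summable_geometric_of_lt_one (by norm_num) (by norm_num)).mul_left _
      calc ∑' i, g (i + k) ≤ ∑' i : ℕ, (9 / 10 ^ (k+1)) * (1/10 : ℝ) ^ i :=
            Summable.tsum_le_tsum hb ((summable_nat_add_iff k).2 hsum) hgs
      _ = (9 / 10 ^ (k+1)) * (1 - 1/10)⁻¹ := by
            rw [tsum_mul_left, tsum_geometric_of_lt_one (by norm_num) (by norm_num)]
      _ = 1 / 10 ^ k := by
            field_simp
            ring
    linarith

theorem stmt19 (x : InfDec) (hx : x.Admissible) (hpos : 0 < x.val) (y : InfDec)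
    (h : ∀ k : ℕ, x.val * (y.trunc k : ℝ) ≤ 1 ∧
      1 < x.val * ((y.trunc k : ℝ) + 1 / 10 ^ k)) :
    x.val * y.val = 1 := by
  have key : ∀ k : ℕ, |x.val * y.val - 1| ≤ x.val * (1/10 : ℝ) ^ k := by
    intro k
    obtain ⟨h1, h2⟩ := h k
    obtain ⟨hl, hu⟩ := trunc_le_val_s19 y k
    have hm1 : x.val * ((y.trunc k : ℚ) : ℝ) ≤ x.val * y.val :=
      mul_le_mul_of_nonneg_left hl hpos.le
    have hm2 : x.val * y.val ≤ x.val * (((y.trunc k : ℚ) : ℝ) + 1 / 10 ^ k) :=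
      mul_le_mul_of_nonneg_left hu hpos.le
    have hpow : (1/10 : ℝ) ^ k = 1 / 10 ^ k := by rw [one_div, inv_pow, one_div]
    rw [hpow, abs_le]
    constructor <;> nlinarith
  have h0 : Filter.Tendsto (fun k : ℕ => x.val * (1/10 : ℝ) ^ k) Filter.atTop (nhds 0) := by
    simpa using (tendsto_pow_atTop_nhds_zero_of_lt_one (by norm_num) (by norm_num)
      : Filter.Tendsto (fun k : ℕ => (1/10 : ℝ) ^ k) Filter.atTop (nhds 0)).const_mul x.val
  have habs : |x.val * y.val - 1| ≤ 0 :=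
    ge_of_tendsto h0 (Filter.Eventually.of_forall key)
  have := abs_nonneg (x.val * y.val - 1)
  have : x.val * y.val - 1 = 0 := by
    have := abs_eq_zero.mp (le_antisymm habs this)
    exact this
  linarith
end
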